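/- arXiv:math/0605792 — 5 statements merged into one kernel-verified Lean document; each statement's English description precedes it below -/
import Mathlib

section
/- Let p ∈ ℝ³, p ≠ 0, and let θ, ω ∈ ℝ³ be unit vectors with θ·p = 0, ω·p = 0, θ·ω = 0. For λ ∈ ℂ\{0} set κ₁(λ) := (i|p|/4)(λ + 1/λ), κ₂(λ) := (|p|/4)(λ − 1/λ), and k(λ) := κ₁(λ)θ + κ₂(λ)ω + p/2 ∈ ℂ³. Then for every λ ∈ ℂ\{0} the vector k(λ) satisfies k(λ)² = 0 and p² = 2 k(λ)·p, and the map λ ↦ k(λ) is a bijection from ℂ\{0} onto Z_p := {k ∈ ℂ³ : k² = 0, p² = 2k·p}, whose inverse is k ↦ λ(k) := 2 k·(θ + iω)/(i|p|). -/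
/-!
Since `θ, ω, p/|p|` is an orthonormal frame of ℝ³, a vector `k ∈ ℂ³` is determined by its
bilinear coordinates `a = k·θ`, `b = k·ω`, `c = k·p/|p|`, and `k² = a² + b² + c²`, `k·p = |p| c`.
So `Z_p` is the conic `a² + b² = -|p|²/4`, `c = |p|/2`, and everything reduces to the plane:
factoring `a² + b² = (a + ib)(a - ib)`, the conic is parametrized by `λ ≠ 0` through
`a + ib = i|p|λ/2`, `a - ib = i|p|/(2λ)`, which is exactly `(a, b) = (κ₁(λ), κ₂(λ))`.
-/

open MeasureTheory Real
open scoped ENNReal BigOperators Classical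

noncomputable section

/-- ℝ³ with the Euclidean norm. -/
abbrev R3 : Type := EuclideanSpace ℝ (Fin 3)
/-- ℂ³ with the Euclidean (Hermitian) norm, i.e. the Euclidean norm of ℝ⁶. -/
abbrev C3 : Type := EuclideanSpace ℂ (Fin 3)

/-- Inclusion of real vectors into ℂ³. -/
def toC (x : R3) : C3 := WithLp.toLp 2 (fun j => (x j : ℂ))

/-- Complex bilinear dot product of `k ∈ ℂ³` with a real vector `ξ`. -/
def dotCR (k : C3) (ξ : R3) : ℂ := ∑ j, k j * (ξ j : ℂ)

/-- Complex bilinear dot product on ℂ³. -/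
def dotCC (k w : C3) : ℂ := ∑ j, k j * w j

/-- `k² = k₁² + k₂² + k₃²`. -/
def kSq (k : C3) : ℂ := ∑ j, k j * k j

/-- `Σ = {k ∈ ℂ³ : k² = 0}`. -/
def SigmaSet : Set C3 := {k | kSq k = 0}

/-- Componentwise imaginary part. -/
def imVec (k : C3) : R3 := WithLp.toLp 2 (fun j => (k j).im)
/-- Componentwise real part. -/
def reVec (k : C3) : R3 := WithLp.toLp 2 (fun j => (k j).re)

/-- The weighted L^∞ norm `‖u‖_μ = ess sup (1+|p|)^μ |u(p)|`, valued in `ℝ≥0∞`. -/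
def wnorm (μ : ℝ) (u : R3 → ℂ) : ℝ≥0∞ :=
  essSup (fun p => ENNReal.ofReal ((1 + ‖p‖) ^ μ) * (‖u p‖₊ : ℝ≥0∞)) volume

/-- The integral term `∫ v̂(p+ξ) H(k,−ξ)/(ξ²+2k·ξ) dξ` of the Faddeev equation;
this is also the operator `A(k)` applied to `Hk`. -/
def faddeevInt (v : R3 → ℂ) (Hk : R3 → ℂ) (k : C3) (p : R3) : ℂ :=
  ∫ ξ : R3, v (p + ξ) * Hk (-ξ) / (((‖ξ‖ ^ 2 : ℝ) : ℂ) + 2 * dotCR k ξ)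

/-- `k_γ(p) = p/2 + (i|p|/2)γ(p)`. -/
def kgamma (γ : R3 → R3) (p : R3) : C3 :=
  WithLp.toLp 2 (fun j => (p j : ℂ) / 2 + Complex.I * ((‖p‖ : ℝ) / 2) * (γ p j : ℂ))

/-- `k(λ) = κ₁(λ)θ + κ₂(λ)ω + p/2` with `κ₁ = (i|p|/4)(λ+1/λ)`, `κ₂ = (|p|/4)(λ−1/λ)`. -/
def kOf (p θ ω : R3) (l : ℂ) : C3 :=
  (Complex.I * (‖p‖ : ℂ) / 4 * (l + 1 / l)) • toC θ
    + ((‖p‖ : ℂ) / 4 * (l - 1 / l)) • toC ω + ((1 : ℂ) / 2) • toC p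

/-- `λ(k) = 2k·(θ+iω)/(i|p|)`. -/
def lamOf (p θ ω : R3) (k : C3) : ℂ :=
  2 * dotCC k (toC θ + Complex.I • toC ω) / (Complex.I * (‖p‖ : ℂ))

/-- `Z_p = {k ∈ ℂ³ : k² = 0, p² = 2k·p}`. -/
def Zset (p : R3) : Set C3 := {k | kSq k = 0 ∧ ((‖p‖ ^ 2 : ℝ) : ℂ) = 2 * dotCR k p}

/-- Parseval's identity for the orthonormal basis `e`, tested on two coordinate vectors. -/
theorem Orthonormal.sum_apply_mul_apply {ι : Type*} [Fintype ι] [DecidableEq ι]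
    {e : ι → EuclideanSpace ℝ ι} (he : Orthonormal ℝ e) (m n : ι) :
    ∑ i, e i m * e i n = if m = n then 1 else 0 := by
  have : Nonempty ι := ⟨m⟩
  have hcard : Fintype.card ι = Module.finrank ℝ (EuclideanSpace ℝ ι) := by simp
  let b := (basisOfOrthonormalOfCardEqFinrank he hcard).toOrthonormalBasis (by simpa)
  have hb : ⇑b = e := by simp [b]
  have := b.sum_inner_mul_inner (EuclideanSpace.single m 1) (EuclideanSpace.single n 1)
  simp only [hb, EuclideanSpace.inner_single_left, EuclideanSpace.inner_single_right] at this
  simpa [PiLp.single_apply, eq_comm] using this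

lemma dotCR_smul_left (c : ℂ) (k : C3) (x : R3) : dotCR (c • k) x = c * dotCR k x := by
  simp [dotCR, Finset.mul_sum, mul_assoc]

lemma dotCR_sum_left {ι : Type*} (s : Finset ι) (k : ι → C3) (x : R3) :
    dotCR (∑ i ∈ s, k i) x = ∑ i ∈ s, dotCR (k i) x := by
  simp only [dotCR, WithLp.ofLp_sum, Finset.sum_apply, Finset.sum_mul]
  exact Finset.sum_comm

lemma dotCR_smul_right (k : C3) (r : ℝ) (x : R3) : dotCR k (r • x) = r * dotCR k x := by
  simp only [dotCR, PiLp.smul_apply, smul_eq_mul, Complex.ofReal_mul, Finset.mul_sum]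
  exact Finset.sum_congr rfl fun _ _ => by ring

lemma dotCR_toC (x y : R3) : dotCR (toC x) y = (inner ℝ x y : ℝ) := by
  simp [dotCR, toC, PiLp.inner_apply, mul_comm]

lemma dotCC_toC (k : C3) (x : R3) : dotCC k (toC x) = dotCR k x := rfl

lemma dotCC_add_right (k w w' : C3) : dotCC k (w + w') = dotCC k w + dotCC k w' := by
  simp [dotCC, mul_add, Finset.sum_add_distrib]

lemma dotCC_smul_right (k w : C3) (c : ℂ) : dotCC k (c • w) = c * dotCC k w := by
  simp only [dotCC, PiLp.smul_apply, smul_eq_mul, Finset.mul_sum]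
  exact Finset.sum_congr rfl fun _ _ => by ring

lemma dotCC_sum_right {ι : Type*} (s : Finset ι) (k : C3) (w : ι → C3) :
    dotCC k (∑ i ∈ s, w i) = ∑ i ∈ s, dotCC k (w i) := by
  simp only [dotCC, WithLp.ofLp_sum, Finset.sum_apply, Finset.mul_sum]
  exact Finset.sum_comm

lemma toC_smul (r : ℝ) (x : R3) : toC (r • x) = (r : ℂ) • toC x := by
  ext j; simp [toC]

section Frame

variable {e : Fin 3 → R3}

lemma sum_dotCR_smul_toC (he : Orthonormal ℝ e) (k : C3) :
    ∑ i, dotCR k (e i) • toC (e i) = k := by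
  ext m
  calc (∑ i, dotCR k (e i) • toC (e i)) m
      = ∑ j, k j * ((∑ i, e i j * e i m : ℝ) : ℂ) := by
        simp only [dotCR, toC, WithLp.ofLp_sum, Finset.sum_apply, PiLp.smul_apply, smul_eq_mul,
          Finset.sum_mul, Finset.mul_sum, Complex.ofReal_sum, Complex.ofReal_mul, mul_assoc]
        exact Finset.sum_comm
    _ = k m := by simp [he.sum_apply_mul_apply, apply_ite]

lemma eq_of_forall_dotCR_eq (he : Orthonormal ℝ e) {k k' : C3}
    (h : ∀ i, dotCR k (e i) = dotCR k' (e i)) : k = k' := by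
  rw [← sum_dotCR_smul_toC he k, ← sum_dotCR_smul_toC he k']
  simp only [h]

lemma dotCR_sum_smul_toC (he : Orthonormal ℝ e) (c : Fin 3 → ℂ) (i : Fin 3) :
    dotCR (∑ j, c j • toC (e j)) (e i) = c i := by
  simp only [dotCR_sum_left, dotCR_smul_left, dotCR_toC, orthonormal_iff_ite.mp he, apply_ite,
    Complex.ofReal_one, Complex.ofReal_zero, mul_one, mul_zero, Finset.sum_ite_eq',
    Finset.mem_univ, if_true]

lemma kSq_eq_sum_sq (he : Orthonormal ℝ e) (k : C3) : kSq k = ∑ i, dotCR k (e i) ^ 2 := by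
  change dotCC k k = _
  conv_lhs => arg 2; rw [← sum_dotCR_smul_toC he k]
  simp only [dotCC_sum_right, dotCC_smul_right, dotCC_toC, sq]

end Frame

open Complex

def kappa₁ (r l : ℂ) : ℂ := I * r / 4 * (l + 1 / l)

def kappa₂ (r l : ℂ) : ℂ := r / 4 * (l - 1 / l)

section Conic

variable {r l a b : ℂ}

lemma kappa₁_sq_add_kappa₂_sq (hl : l ≠ 0) : kappa₁ r l ^ 2 + kappa₂ r l ^ 2 = -r ^ 2 / 4 := by
  have hinv : l * (1 / l) = 1 := mul_one_div_cancel hl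
  unfold kappa₁ kappa₂
  linear_combination r ^ 2 / 16 * (l + 1 / l) ^ 2 * I_sq - r ^ 2 / 4 * hinv

lemma kappa₁_add_I_mul_kappa₂ (r l : ℂ) : kappa₁ r l + I * kappa₂ r l = I * r * l / 2 := by
  unfold kappa₁ kappa₂; ring

lemma add_I_mul_ne_zero_of_sq_add_sq (hr : r ≠ 0) (h : a ^ 2 + b ^ 2 = -r ^ 2 / 4) :
    a + I * b ≠ 0 := by
  intro hs
  have : (a + I * b) * (a - I * b) = -r ^ 2 / 4 := by linear_combination h - b ^ 2 * I_sq
  rw [hs, zero_mul] at this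
  exact hr (pow_eq_zero_iff two_ne_zero |>.mp (by linear_combination 4 * this))

lemma kappa₁_of_sq_add_sq (hr : r ≠ 0) (h : a ^ 2 + b ^ 2 = -r ^ 2 / 4) :
    kappa₁ r (2 * (a + I * b) / (I * r)) = a := by
  have hs := add_I_mul_ne_zero_of_sq_add_sq hr h
  unfold kappa₁
  field_simp
  linear_combination -4 * h + (4 * b ^ 2 + r ^ 2) * I_sq

lemma kappa₂_of_sq_add_sq (hr : r ≠ 0) (h : a ^ 2 + b ^ 2 = -r ^ 2 / 4) :
    kappa₂ r (2 * (a + I * b) / (I * r)) = b := by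
  have hs := add_I_mul_ne_zero_of_sq_add_sq hr h
  unfold kappa₂
  field_simp
  linear_combination 4 * h + (-4 * b ^ 2 - r ^ 2) * I_sq

end Conic

lemma real_inner_eq_sum_mul (x y : R3) : inner ℝ x y = ∑ j, x j * y j := by
  simp [PiLp.inner_apply, mul_comm]

lemma orthonormal_vecCons_inv_norm_smul {E : Type*} [NormedAddCommGroup E] [InnerProductSpace ℝ E]
    {p θ ω : E} (hp : p ≠ 0) (hθ : ‖θ‖ = 1) (hω : ‖ω‖ = 1) (hθp : inner ℝ θ p = 0)
    (hωp : inner ℝ ω p = 0) (hθω : inner ℝ θ ω = 0) : Orthonormal ℝ ![θ, ω, ‖p‖⁻¹ • p] := by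
  have hu : ‖‖p‖⁻¹ • p‖ = 1 := norm_smul_inv_norm hp
  rw [orthonormal_iff_ite]
  intro i j
  fin_cases i <;> fin_cases j <;>
    simp [inner_smul_left, inner_smul_right, real_inner_comm, hθ, hω, hu, hθp, hωp, hθω,
      (real_inner_comm θ p).trans hθp, (real_inner_comm ω p).trans hωp]

section Zset

variable {p θ ω : R3}

lemma ofReal_norm_ne_zero_of_orthonormal (he : Orthonormal ℝ ![θ, ω, ‖p‖⁻¹ • p]) :
    (‖p‖ : ℂ) ≠ 0 := by
  norm_cast
  intro h
  simpa [h] using he.ne_zero 2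

lemma mem_Zset_iff (he : Orthonormal ℝ ![θ, ω, ‖p‖⁻¹ • p]) {k : C3} :
    k ∈ Zset p ↔ dotCR k θ ^ 2 + dotCR k ω ^ 2 = -(‖p‖ : ℂ) ^ 2 / 4 ∧
      dotCR k (‖p‖⁻¹ • p) = (‖p‖ : ℂ) / 2 := by
  have hpC := ofReal_norm_ne_zero_of_orthonormal he
  have hkp : dotCR k p = ‖p‖ * dotCR k (‖p‖⁻¹ • p) := by
    rw [dotCR_smul_right, Complex.ofReal_inv, mul_inv_cancel_left₀ hpC]
  simp only [Zset, Set.mem_ofPred_eq, kSq_eq_sum_sq he k, Fin.sum_univ_three, hkp, Fin.isValue,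
    Matrix.cons_val_zero, Matrix.cons_val_one, Matrix.cons_val, ofReal_pow]
  generalize dotCR k θ = a, dotCR k ω = b, dotCR k (‖p‖⁻¹ • p) = c, (‖p‖ : ℂ) = r at *
  constructor
  · rintro ⟨hsq, hdot⟩
    have hc : c = r / 2 := mul_left_cancel₀ hpC (by linear_combination -hdot / 2)
    exact ⟨by linear_combination hsq - (c + r / 2) * hc, hc⟩
  · rintro ⟨hab, hc⟩
    exact ⟨by linear_combination hab + (c + r / 2) * hc, by linear_combination -2 * r * hc⟩

lemma kOf_eq_sum (he : Orthonormal ℝ ![θ, ω, ‖p‖⁻¹ • p]) (l : ℂ) :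
    kOf p θ ω l = ∑ i, ![kappa₁ ‖p‖ l, kappa₂ ‖p‖ l, ‖p‖ / 2] i • toC (![θ, ω, ‖p‖⁻¹ • p] i) := by
  have hpC := ofReal_norm_ne_zero_of_orthonormal he
  simp only [kOf, kappa₁, kappa₂, one_div, Fin.sum_univ_three, Fin.isValue, Matrix.cons_val_zero,
    Matrix.cons_val_one, Matrix.cons_val, toC_smul, ofReal_inv, smul_smul, add_right_inj]
  congr 1
  field_simp

lemma dotCR_kOf (he : Orthonormal ℝ ![θ, ω, ‖p‖⁻¹ • p]) (l : ℂ) :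
    dotCR (kOf p θ ω l) θ = kappa₁ ‖p‖ l ∧ dotCR (kOf p θ ω l) ω = kappa₂ ‖p‖ l ∧
      dotCR (kOf p θ ω l) (‖p‖⁻¹ • p) = ‖p‖ / 2 := by
  rw [kOf_eq_sum he]
  exact ⟨dotCR_sum_smul_toC he _ 0, dotCR_sum_smul_toC he _ 1, dotCR_sum_smul_toC he _ 2⟩

lemma lamOf_eq (k : C3) : lamOf p θ ω k = 2 * (dotCR k θ + I * dotCR k ω) / (I * ‖p‖) := by
  simp only [lamOf, dotCC_add_right, dotCC_smul_right, dotCC_toC]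

end Zset

/-- `λ ↦ k(λ)` is a bijection from `ℂ\{0}` onto `Z_p`, with inverse `λ(k)`. -/
theorem stmt_8 (p θ ω : R3) (hp : p ≠ 0) (hθ : ‖θ‖ = 1) (hω : ‖ω‖ = 1)
    (hθp : ∑ j, θ j * p j = 0) (hωp : ∑ j, ω j * p j = 0)
    (hθω : ∑ j, θ j * ω j = 0) :
    (∀ l : ℂ, l ≠ 0 → kOf p θ ω l ∈ Zset p) ∧
    Set.BijOn (kOf p θ ω) {l : ℂ | l ≠ 0} (Zset p) ∧
    Set.InvOn (lamOf p θ ω) (kOf p θ ω) {l : ℂ | l ≠ 0} (Zset p) := by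
  simp only [← real_inner_eq_sum_mul] at hθp hωp hθω
  have he := orthonormal_vecCons_inv_norm_smul hp hθ hω hθp hωp hθω
  have hpC := ofReal_norm_ne_zero_of_orthonormal he
  have hk : Set.MapsTo (kOf p θ ω) {l | l ≠ 0} (Zset p) := fun l hl => by
    obtain ⟨h₁, h₂, h₃⟩ := dotCR_kOf he l
    rw [mem_Zset_iff he, h₁, h₂, h₃]
    exact ⟨kappa₁_sq_add_kappa₂_sq hl, rfl⟩
  have hlam : Set.MapsTo (lamOf p θ ω) (Zset p) {l | l ≠ 0} := fun k hk => by
    obtain ⟨hab, -⟩ := (mem_Zset_iff he).1 hk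
    rw [Set.mem_ofPred_eq, lamOf_eq]
    exact div_ne_zero (mul_ne_zero two_ne_zero (add_I_mul_ne_zero_of_sq_add_sq hpC hab))
      (mul_ne_zero I_ne_zero hpC)
  have hleft : Set.LeftInvOn (lamOf p θ ω) (kOf p θ ω) {l | l ≠ 0} := fun l _ => by
    obtain ⟨h₁, h₂, -⟩ := dotCR_kOf he l
    rw [lamOf_eq, h₁, h₂, kappa₁_add_I_mul_kappa₂]
    field_simp
  have hright : Set.RightInvOn (lamOf p θ ω) (kOf p θ ω) (Zset p) := fun k hk => by
    obtain ⟨hab, hc⟩ := (mem_Zset_iff he).1 hk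
    obtain ⟨h₁, h₂, h₃⟩ := dotCR_kOf he (lamOf p θ ω k)
    refine eq_of_forall_dotCR_eq he fun i => ?_
    rw [lamOf_eq] at h₁ h₂ h₃ ⊢
    fin_cases i
    exacts [h₁.trans (kappa₁_of_sq_add_sq hpC hab), h₂.trans (kappa₂_of_sq_add_sq hpC hab),
      h₃.trans hc.symm]
  exact ⟨hk, Set.InvOn.bijOn ⟨hleft, hright⟩ hk hlam, hleft, hright⟩
end
end

section
/- Let p ∈ ℝ³, p ≠ 0, and let θ, ω ∈ ℝ³ be unit vectors with θ·p = 0, ω·p = 0, θ·ω = 0. For λ ∈ ℂ\{0} set k(λ) := (i|p|/4)(λ + 1/λ)θ + (|p|/4)(λ − 1/λ)ω + p/2 ∈ ℂ³. Then |Im k(λ)| = |Re k(λ)| = (|p|/4)(|λ| + 1/|λ|) for every λ ∈ ℂ\{0}, where Re k(λ), Im k(λ) ∈ ℝ³ are the real and imaginary parts of k(λ) taken componentwise and |·| is the Euclidean norm on ℝ³. -/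
open MeasureTheory Real
open scoped ENNReal BigOperators Classical

noncomputable section

/-! With `θ, ω, p` orthogonal and `θ, ω` unit vectors, `Im k(λ) = (|p|/4)(a θ + b ω)` where
`a + ib = λ + conj λ⁻¹ = λ (1 + |λ|⁻²)` has modulus `|λ| + 1/|λ|`, and
`Re k(λ) = (|p|/4)(c θ + d ω) + p/2` where `c + id = i (λ - conj λ⁻¹)` has modulus
`||λ| - 1/|λ||`. Pythagoras and `(r - 1/r)² + 4 = (r + 1/r)²` for `r = |λ| > 0` finish. -/

open scoped ComplexConjugate

lemma Complex.conj_inv_eq (z : ℂ) : conj z⁻¹ = z * ((‖z‖ ^ 2)⁻¹ : ℝ) := by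
  rw [map_inv₀, Complex.inv_def, Complex.conj_conj, Complex.normSq_conj, Complex.normSq_eq_norm_sq]

lemma Complex.norm_add_conj_inv (z : ℂ) : ‖z + conj z⁻¹‖ = ‖z‖ + ‖z‖⁻¹ := by
  rcases eq_or_ne z 0 with rfl | hz
  · simp
  rw [conj_inv_eq, ← mul_one_add, norm_mul, ← ofReal_one, ← ofReal_add, norm_real,
    Real.norm_of_nonneg (by positivity)]
  field_simp

lemma Complex.norm_sub_conj_inv (z : ℂ) : ‖z - conj z⁻¹‖ = |‖z‖ - ‖z‖⁻¹| := by
  rcases eq_or_ne z 0 with rfl | hz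
  · simp
  rw [conj_inv_eq, ← mul_one_sub, norm_mul, ← ofReal_one, ← ofReal_sub, norm_real,
    Real.norm_eq_abs, ← abs_norm z, ← abs_mul, abs_norm]
  congr 1
  field_simp

section Plane

variable {E : Type*} [NormedAddCommGroup E] [InnerProductSpace ℝ E]

lemma norm_re_smul_add_im_smul {x y : E} (hx : ‖x‖ = 1) (hy : ‖y‖ = 1) (hxy : inner ℝ x y = 0)
    (w : ℂ) : ‖w.re • x + w.im • y‖ = ‖w‖ := by
  have h : ‖w.re • x + w.im • y‖ ^ 2 = ‖w‖ ^ 2 := by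
    rw [norm_add_sq_real, inner_smul_left, inner_smul_right, hxy,
      norm_smul, norm_smul, hx, hy, ← Complex.normSq_eq_norm_sq, Complex.normSq_apply]
    simp only [Real.norm_eq_abs, sq_abs, mul_one, mul_zero, add_zero]
    ring
  exact (sq_eq_sq₀ (norm_nonneg _) (norm_nonneg _)).1 h

lemma inner_re_smul_add_im_smul_eq_zero {x y z : E} (hxz : inner ℝ x z = 0)
    (hyz : inner ℝ y z = 0) (w : ℂ) : inner ℝ (w.re • x + w.im • y) z = 0 := by
  simp [inner_add_left, inner_smul_left, hxz, hyz]

end Plane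

lemma EuclideanSpace.real_inner_eq_sum {n : ℕ} (x y : EuclideanSpace ℝ (Fin n)) :
    inner ℝ x y = ∑ j, x j * y j := by
  simp [PiLp.inner_apply, mul_comm]

lemma imVec_kOf (p θ ω : R3) (l : ℂ) :
    imVec (kOf p θ ω l) = (‖p‖ / 4) • ((l + conj l⁻¹).re • θ + (l + conj l⁻¹).im • ω) := by
  ext j
  simp only [imVec, kOf, toC, PiLp.add_apply, PiLp.smul_apply, smul_eq_mul, Complex.add_re,
    Complex.add_im, Complex.sub_re, Complex.sub_im, Complex.mul_re, Complex.mul_im, Complex.I_re,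
    Complex.I_im, Complex.ofReal_re, Complex.ofReal_im, Complex.conj_re, Complex.conj_im,
    Complex.div_ofNat_re, Complex.div_ofNat_im, Complex.one_re, Complex.one_im, one_div l]
  ring

lemma reVec_kOf (p θ ω : R3) (l : ℂ) :
    reVec (kOf p θ ω l) = (‖p‖ / 4) • ((Complex.I * (l - conj l⁻¹)).re • θ
      + (Complex.I * (l - conj l⁻¹)).im • ω) + (1 / 2 : ℝ) • p := by
  ext j
  simp only [reVec, kOf, toC, PiLp.add_apply, PiLp.smul_apply, smul_eq_mul, Complex.add_re,
    Complex.add_im, Complex.sub_re, Complex.sub_im, Complex.mul_re, Complex.mul_im, Complex.I_re,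
    Complex.I_im, Complex.ofReal_re, Complex.ofReal_im, Complex.conj_re, Complex.conj_im,
    Complex.div_ofNat_re, Complex.div_ofNat_im, Complex.one_re, Complex.one_im, one_div l]
  ring

theorem stmt_9_general (p θ ω : R3) (hθ : ‖θ‖ = 1) (hω : ‖ω‖ = 1)
    (hθp : ∑ j, θ j * p j = 0) (hωp : ∑ j, ω j * p j = 0)
    (hθω : ∑ j, θ j * ω j = 0) :
    ∀ l : ℂ, l ≠ 0 →
      ‖imVec (kOf p θ ω l)‖ = ‖reVec (kOf p θ ω l)‖ ∧
      ‖imVec (kOf p θ ω l)‖ = ‖p‖ / 4 * (‖l‖ + 1 / ‖l‖) := by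
  intro l hl
  rw [← EuclideanSpace.real_inner_eq_sum] at hθp hωp hθω
  have hIm : ‖imVec (kOf p θ ω l)‖ = ‖p‖ / 4 * (‖l‖ + ‖l‖⁻¹) := by
    rw [imVec_kOf, norm_smul, norm_re_smul_add_im_smul hθ hω hθω, Complex.norm_add_conj_inv,
      Real.norm_of_nonneg (by positivity)]
  have hRe : ‖reVec (kOf p θ ω l)‖ = ‖p‖ / 4 * (‖l‖ + ‖l‖⁻¹) := by
    have horth := inner_re_smul_add_im_smul_eq_zero hθp hωp (Complex.I * (l - conj l⁻¹))
    rw [reVec_kOf, norm_add_eq_sqrt_iff_real_inner_eq_zero.2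
        (by rw [inner_smul_left, inner_smul_right, horth]; simp),
      norm_smul, norm_smul, norm_re_smul_add_im_smul hθ hω hθω, norm_mul, Complex.norm_I,
      one_mul, Complex.norm_sub_conj_inv,
      ← Real.sqrt_sq (by positivity : 0 ≤ ‖p‖ / 4 * (‖l‖ + ‖l‖⁻¹))]
    have hl' : ‖l‖ ≠ 0 := norm_ne_zero_iff.2 hl
    congr 1
    rw [mul_mul_mul_comm, abs_mul_abs_self]
    simp only [norm_div, norm_norm, norm_one, Real.norm_ofNat]
    field_simp
    ring
  exact ⟨hIm.trans hRe.symm, by rw [hIm, one_div]⟩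

/-- `|Im k(λ)| = |Re k(λ)| = (|p|/4)(|λ| + 1/|λ|)`. -/
theorem stmt_9 (p θ ω : R3) (hp : p ≠ 0) (hθ : ‖θ‖ = 1) (hω : ‖ω‖ = 1)
    (hθp : ∑ j, θ j * p j = 0) (hωp : ∑ j, ω j * p j = 0)
    (hθω : ∑ j, θ j * ω j = 0) :
    ∀ l : ℂ, l ≠ 0 →
      ‖imVec (kOf p θ ω l)‖ = ‖reVec (kOf p θ ω l)‖ ∧
      ‖imVec (kOf p θ ω l)‖ = ‖p‖ / 4 * (‖l‖ + 1 / ‖l‖) :=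
  stmt_9_general p θ ω hθ hω hθp hωp hθω
end
end

section
/- There exists a constant n₁ > 0 such that for every λ ∈ ℂ one has ∫_ℂ |ζ| / ((|ζ|²+1)² |ζ−λ|) dReζ dImζ ≤ n₁, where the integral is with respect to Lebesgue measure on ℂ ≅ ℝ². -/
/-!
Split the integrand at the unit ball around `λ`. Inside it, `|ζ| / (|ζ|² + 1)² ≤ 1`, and what is
left is a translate of `1 / |ζ|` on the unit disc, integrable because the dimension exceeds `1`.
Outside it, `|ζ - λ| ≥ 1`, and what is left is `|ζ| / (|ζ|² + 1)² = O(|ζ|⁻³)`, integrable because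
the dimension is below `3`. Neither bound depends on `λ`.
-/

open MeasureTheory Metric Set
open scoped ENNReal

lemma div_sq_add_one_sq_le_one (t : ℝ) : t / (t ^ 2 + 1) ^ 2 ≤ 1 := by
  rw [div_le_one (by positivity)]
  nlinarith [sq_nonneg (t - 1), sq_nonneg t]

lemma div_sq_add_one_sq_le_rpow {t : ℝ} (ht : 0 ≤ t) :
    t / (t ^ 2 + 1) ^ 2 ≤ 4 * (1 + t) ^ (-3 : ℝ) := by
  rw [Real.rpow_neg (by positivity), show (3 : ℝ) = (3 : ℕ) by norm_num, Real.rpow_natCast,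
    ← div_eq_mul_inv, div_le_div_iff₀ (by positivity) (by positivity)]
  nlinarith [sq_nonneg (t - 1), sq_nonneg t, sq_nonneg (t * t - t), sq_nonneg (t * t - 1)]

section

variable {E : Type*} [NormedAddCommGroup E]

lemma ofReal_norm_div_mul_le_indicator_add (ζ l : E) :
    ENNReal.ofReal ‖ζ‖ / (ENNReal.ofReal ((‖ζ‖ ^ 2 + 1) ^ 2) * ENNReal.ofReal ‖ζ - l‖) ≤
      (ball l 1).indicator (fun ζ ↦ (ENNReal.ofReal ‖ζ - l‖)⁻¹) ζ +
        ENNReal.ofReal (‖ζ‖ / (‖ζ‖ ^ 2 + 1) ^ 2) := by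
  have hpos : 0 < (‖ζ‖ ^ 2 + 1) ^ 2 := by positivity
  rw [div_eq_mul_inv,
    ENNReal.mul_inv (.inl (ENNReal.ofReal_pos.2 hpos).ne') (.inl ENNReal.ofReal_ne_top),
    ← mul_assoc, ← div_eq_mul_inv (ENNReal.ofReal ‖ζ‖), ← ENNReal.ofReal_div_of_pos hpos]
  by_cases hζ : ζ ∈ ball l 1
  · rw [indicator_of_mem hζ]
    calc _ ≤ 1 * (ENNReal.ofReal ‖ζ - l‖)⁻¹ := by
          gcongr
          exact ENNReal.ofReal_le_one.2 (div_sq_add_one_sq_le_one ‖ζ‖)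
      _ ≤ _ := by rw [one_mul]; exact le_self_add
  · rw [indicator_of_notMem hζ, zero_add]
    have : 1 ≤ ‖ζ - l‖ := by simpa [dist_eq_norm] using hζ
    calc _ ≤ ENNReal.ofReal (‖ζ‖ / (‖ζ‖ ^ 2 + 1) ^ 2) * 1 := by
          gcongr
          exact ENNReal.inv_le_one.2 (ENNReal.one_le_ofReal.2 this)
      _ = _ := mul_one _

variable [MeasurableSpace E] [BorelSpace E] (μ : Measure E)

lemma lintegral_ball_inv_norm_sub_eq [μ.IsAddRightInvariant] (c : E) (r : ℝ) :
    ∫⁻ x in ball c r, (ENNReal.ofReal ‖x - c‖)⁻¹ ∂μ =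
      ∫⁻ x in ball 0 r, (ENNReal.ofReal ‖x‖)⁻¹ ∂μ := by
  have hball : ball c r = (· - c) ⁻¹' ball 0 r := by ext x; simp [dist_eq_norm]
  rw [hball]
  exact (measurePreserving_sub_right μ c).setLIntegral_comp_preimage measurableSet_ball
    (ENNReal.measurable_ofReal.comp measurable_norm).inv

variable [NormedSpace ℝ E] [FiniteDimensional ℝ E] [μ.IsAddHaarMeasure]

lemma lintegral_ball_zero_inv_norm_lt_top (hE : 1 < Module.finrank ℝ E) (r : ℝ) :
    ∫⁻ x in ball 0 r, (ENNReal.ofReal ‖x‖)⁻¹ ∂μ < ∞ := by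
  have : Nontrivial E := Module.nontrivial_of_finrank_pos (R := ℝ) (by omega)
  have hint : IntegrableOn (fun x : E ↦ ‖x‖⁻¹) (ball 0 r) μ :=
    integrableOn_ball_of_norm_le_rpow (C := 1) (α := 1) hE.le (by exact_mod_cast hE)
      (ae_of_all _ fun x ↦ by simp [Real.rpow_neg_one]) (by fun_prop)
  refine lt_of_eq_of_lt (lintegral_congr_ae ?_) hint.2
  filter_upwards [ae_restrict_of_ae (μ.ae_ne 0)] with x hx
  rw [enorm_inv (norm_ne_zero_iff.2 hx), enorm_norm, ofReal_norm]

lemma lintegral_norm_div_sq_add_one_sq_lt_top (hE : Module.finrank ℝ E < 3) :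
    ∫⁻ x, ENNReal.ofReal (‖x‖ / (‖x‖ ^ 2 + 1) ^ 2) ∂μ < ∞ := by
  calc _ ≤ ∫⁻ x, 4 * ENNReal.ofReal ((1 + ‖x‖) ^ (-3 : ℝ)) ∂μ := by
        refine lintegral_mono fun x ↦ ?_
        rw [← ENNReal.ofReal_ofNat, ← ENNReal.ofReal_mul (by norm_num)]
        exact ENNReal.ofReal_le_ofReal (div_sq_add_one_sq_le_rpow (norm_nonneg x))
    _ = 4 * ∫⁻ x, ENNReal.ofReal ((1 + ‖x‖) ^ (-3 : ℝ)) ∂μ := lintegral_const_mul _ (by fun_prop)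
    _ < ∞ := ENNReal.mul_lt_top (by simp) (finite_integral_one_add_norm (by exact_mod_cast hE))

theorem exists_lintegral_norm_div_mul_norm_sub_le (hE : Module.finrank ℝ E = 2) :
    ∃ C ≠ ∞, ∀ l : E, ∫⁻ ζ, ENNReal.ofReal ‖ζ‖ /
      (ENNReal.ofReal ((‖ζ‖ ^ 2 + 1) ^ 2) * ENNReal.ofReal ‖ζ - l‖) ∂μ ≤ C := by
  refine ⟨(∫⁻ x in ball 0 1, (ENNReal.ofReal ‖x‖)⁻¹ ∂μ) +
      ∫⁻ x, ENNReal.ofReal (‖x‖ / (‖x‖ ^ 2 + 1) ^ 2) ∂μ,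
    ENNReal.add_ne_top.2 ⟨(lintegral_ball_zero_inv_norm_lt_top μ (by omega) 1).ne,
      (lintegral_norm_div_sq_add_one_sq_lt_top μ (by omega)).ne⟩, fun l ↦ ?_⟩
  calc _ ≤ ∫⁻ ζ, (ball l 1).indicator (fun ζ ↦ (ENNReal.ofReal ‖ζ - l‖)⁻¹) ζ +
        ENNReal.ofReal (‖ζ‖ / (‖ζ‖ ^ 2 + 1) ^ 2) ∂μ :=
        lintegral_mono fun ζ ↦ ofReal_norm_div_mul_le_indicator_add ζ l
    _ = _ := by
      have hmeas : Measurable fun ζ ↦ (ENNReal.ofReal ‖ζ - l‖)⁻¹ := by fun_prop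
      rw [lintegral_add_left (hmeas.indicator measurableSet_ball),
        lintegral_indicator measurableSet_ball, lintegral_ball_inv_norm_sub_eq]

end

/-- estimate (11.4): `∫_ℂ |ζ|/((|ζ|²+1)²|ζ−λ|) ≤ n₁` uniformly in `λ`. -/
theorem stmt_14 :
    ∃ n₁ : ℝ, 0 < n₁ ∧
      ∀ l : ℂ,
        ∫⁻ ζ : ℂ, ENNReal.ofReal ‖ζ‖ /
            (ENNReal.ofReal ((‖ζ‖ ^ 2 + 1) ^ 2) *
              ENNReal.ofReal ‖ζ - l‖)
          ≤ ENNReal.ofReal n₁ := by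
  obtain ⟨C, hC, hbound⟩ := exists_lintegral_norm_div_mul_norm_sub_le volume
    Complex.finrank_real_complex
  refine ⟨C.toReal + 1, by positivity, fun l ↦ (hbound l).trans ?_⟩
  rw [ENNReal.le_ofReal_iff_toReal_le hC (by positivity)]
  linarith
end

section
/- There exists a constant n₂ > 0 such that for every λ ∈ ℂ and every ρ > 0 one has ∫_ℂ (|ζ|²+1) ρ / ( |ζ|² (1 + ρ(|ζ| + |ζ|⁻¹))² |ζ−λ| ) dReζ dImζ ≤ n₂, where the integral is with respect to Lebesgue measure on ℂ ≅ ℝ². -/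
open MeasureTheory Set Metric Filter
open scoped ENNReal

/-! With `t = ‖ζ‖` and `d = ‖ζ - λ‖` the integrand is `G(t) / d`, where
`G(t) = ρ(1 + t²) / (t + ρ(1 + t²))²`. Where `t ≤ 2d` it is at most `2 G(t) / t`, a radial
function with integral `4π ∫₀^∞ G ≤ 16π`, since `G ≤ 2ρ/(ρ + t)² + 2ρ/(1 + ρt)²` and each term
integrates to `2`. Where `t > 2d` the triangle inequality gives `d ≤ ‖λ‖ ≤ 3t/2`, so
`G ≤ 1/(4t)` bounds the integrand by `3/(8‖λ‖d)` on the disc `d ≤ ‖λ‖`, of integral `3π/4`.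
Neither bound depends on `λ` or `ρ`. -/

lemma lintegral_Ioi_ofReal_div_add_mul_sq {A b c : ℝ} (hA : 0 ≤ A) (hb : 0 < b) (hc : 0 < c) :
    ∫⁻ r in Ioi 0, ENNReal.ofReal (A / (b + c * r) ^ 2) = ENNReal.ofReal (A / (c * b)) := by
  set F : ℝ → ℝ := fun r ↦ -(A / c) * (b + c * r)⁻¹
  have hpos : ∀ r ∈ Ici (0 : ℝ), 0 < b + c * r := fun r (hr : 0 ≤ r) ↦ by positivity
  have hderiv : ∀ r ∈ Ici (0 : ℝ), HasDerivAt F (A / (b + c * r) ^ 2) r := fun r hr ↦ by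
    have e : A / (b + c * r) ^ 2 = -(A / c) * (-(c * 1) / (b + c * id r) ^ 2) := by
      simp only [id]; field_simp
    rw [e]
    exact ((((hasDerivAt_id r).const_mul c).const_add b).inv (hpos r hr).ne').const_mul _
  have hlim : Tendsto F atTop (nhds 0) :=
    tendsto_const_nhds.div_atTop <| tendsto_atTop_add_const_left _ b <|
      tendsto_id.const_mul_atTop hc
  have hderiv' : ∀ r ∈ Ioi (0 : ℝ), HasDerivAt F (A / (b + c * r) ^ 2) r :=
    fun r (hr : 0 < r) ↦ hderiv r hr.le
  have hnonneg : ∀ r ∈ Ioi (0 : ℝ), 0 ≤ A / (b + c * r) ^ 2 := fun r _ ↦ by positivity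
  have hcont : ContinuousWithinAt F (Ici 0) 0 :=
    (hderiv 0 self_mem_Ici).continuousAt.continuousWithinAt
  have hint := integrableOn_Ioi_deriv_of_nonneg hcont hderiv' hnonneg hlim
  rw [← ofReal_integral_eq_lintegral_ofReal hint
      (ae_restrict_of_forall_mem measurableSet_Ioi hnonneg),
    integral_Ioi_of_hasDerivAt_of_tendsto hcont hderiv' hint hlim]
  congr 1
  simp only [F]
  field_simp
  ring

lemma lintegral_fun_norm_addHaar {E : Type*} [NormedAddCommGroup E] [NormedSpace ℝ E]
    [FiniteDimensional ℝ E] [Nontrivial E] [MeasurableSpace E] [BorelSpace E] (μ : Measure E)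
    [μ.IsAddHaarMeasure] {f : ℝ → ℝ≥0∞} (hf : Measurable f) :
    ∫⁻ x, f ‖x‖ ∂μ = Module.finrank ℝ E * μ (ball 0 1) *
      ∫⁻ r in Ioi 0, ENNReal.ofReal (r ^ (Module.finrank ℝ E - 1)) * f r := by
  have hg : Measurable fun p : sphere (0 : E) 1 × Ioi (0 : ℝ) ↦ f p.2 :=
    hf.comp (measurable_subtype_coe.comp measurable_snd)
  calc ∫⁻ x, f ‖x‖ ∂μ = ∫⁻ x : ({0}ᶜ : Set E), f ‖x.1‖ ∂μ.comap (↑) := by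
        rw [lintegral_subtype_comap (measurableSet_singleton _).compl fun x ↦ f ‖x‖,
          restrict_compl_singleton]
    _ = ∫⁻ p, f p.2 ∂μ.toSphere.prod (.volumeIoiPow (Module.finrank ℝ E - 1)) := by
        rw [← μ.measurePreserving_homeomorphUnitSphereProd.lintegral_comp hg]
        simp
    _ = μ.toSphere univ * ∫⁻ r : Ioi (0 : ℝ), f r ∂.volumeIoiPow (Module.finrank ℝ E - 1) := by
        rw [lintegral_prod _ hg.aemeasurable]
        simp only [lintegral_const, mul_comm]
    _ = _ := by
        rw [μ.toSphere_apply_univ, Measure.volumeIoiPow,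
          lintegral_withDensity_eq_lintegral_mul _ (by fun_prop)
            (show Measurable fun r : Ioi (0 : ℝ) ↦ f r from hf.comp measurable_subtype_coe),
          ← lintegral_subtype_comap measurableSet_Ioi
            fun r ↦ ENNReal.ofReal (r ^ (Module.finrank ℝ E - 1)) * f r]
        rfl

lemma lintegral_fun_norm_complex {f : ℝ → ℝ≥0∞} (hf : Measurable f) :
    ∫⁻ z : ℂ, f ‖z‖ = 2 * ENNReal.ofReal Real.pi * ∫⁻ r in Ioi 0, ENNReal.ofReal r * f r := by
  simp [lintegral_fun_norm_addHaar volume hf, Complex.volume_ball, ← ENNReal.ofReal_coe_nnreal]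

noncomputable def radialWeight (ρ t : ℝ) : ℝ := ρ * (1 + t ^ 2) / (t + ρ * (1 + t ^ 2)) ^ 2

@[fun_prop]
lemma measurable_radialWeight (ρ : ℝ) : Measurable (radialWeight ρ) := by
  unfold radialWeight; fun_prop

lemma radialWeight_eq {ρ t : ℝ} (ht : t ≠ 0) :
    (t ^ 2 + 1) * ρ / (t ^ 2 * (1 + ρ * (t + t⁻¹)) ^ 2) = radialWeight ρ t := by
  rw [radialWeight, show t ^ 2 * (1 + ρ * (t + t⁻¹)) ^ 2 = (t + ρ * (1 + t ^ 2)) ^ 2 by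
    field_simp; ring]
  ring

lemma radialWeight_nonneg {ρ : ℝ} (hρ : 0 ≤ ρ) (t : ℝ) : 0 ≤ radialWeight ρ t := by
  unfold radialWeight; positivity

lemma radialWeight_le_inv {ρ t : ℝ} (hρ : 0 ≤ ρ) (ht : 0 < t) :
    radialWeight ρ t ≤ 1 / (4 * t) := by
  unfold radialWeight
  rw [div_le_div_iff₀ (by positivity) (by positivity)]
  nlinarith [sq_nonneg (t - ρ * (1 + t ^ 2))]

lemma radialWeight_le {ρ t : ℝ} (hρ : 0 < ρ) (ht : 0 ≤ t) :
    radialWeight ρ t ≤ 2 * ρ / (ρ + t) ^ 2 + 2 * ρ / (1 + ρ * t) ^ 2 := by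
  rcases le_total t 1 with h1 | h1
  · have : radialWeight ρ t ≤ 2 * ρ / (ρ + t) ^ 2 := by
      have ht2 : t ^ 2 ≤ 1 := by nlinarith
      refine div_le_div₀ (by positivity) (by nlinarith) (by positivity) ?_
      exact pow_le_pow_left₀ (by positivity) (by nlinarith) 2
    linarith [show 0 ≤ 2 * ρ / (1 + ρ * t) ^ 2 by positivity]
  · have : radialWeight ρ t ≤ 2 * ρ / (1 + ρ * t) ^ 2 := calc
      radialWeight ρ t ≤ 2 * ρ * t ^ 2 / (t * (1 + ρ * t)) ^ 2 := by
        have ht2 : 1 ≤ t ^ 2 := by nlinarith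
        refine div_le_div₀ (by positivity) (by nlinarith) (by positivity) ?_
        exact pow_le_pow_left₀ (by positivity) (by nlinarith) 2
      _ = 2 * ρ / (1 + ρ * t) ^ 2 := by
        have : t ≠ 0 := by positivity
        field_simp
    linarith [show 0 ≤ 2 * ρ / (ρ + t) ^ 2 by positivity]

lemma lintegral_radialWeight_le {ρ : ℝ} (hρ : 0 < ρ) :
    ∫⁻ r in Ioi 0, ENNReal.ofReal (radialWeight ρ r) ≤ 4 := by
  have h₁ := lintegral_Ioi_ofReal_div_add_mul_sq (A := 2 * ρ) (by positivity) hρ one_pos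
  have h₂ := lintegral_Ioi_ofReal_div_add_mul_sq (A := 2 * ρ) (by positivity) one_pos hρ
  simp only [one_mul, mul_one] at h₁ h₂
  calc ∫⁻ r in Ioi 0, ENNReal.ofReal (radialWeight ρ r)
      ≤ ∫⁻ r in Ioi 0, (ENNReal.ofReal (2 * ρ / (ρ + r) ^ 2) +
          ENNReal.ofReal (2 * ρ / (1 + ρ * r) ^ 2)) := by
        refine setLIntegral_mono' measurableSet_Ioi fun r hr ↦ ?_
        rw [← ENNReal.ofReal_add (by positivity) (by positivity)]
        exact ENNReal.ofReal_le_ofReal (radialWeight_le hρ (le_of_lt hr))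
    _ = 4 := by
        rw [lintegral_add_left (by fun_prop), h₁, h₂, mul_div_assoc, div_self hρ.ne', mul_one,
          ← ENNReal.ofReal_add (by norm_num) (by norm_num)]
        norm_num

lemma lintegral_radialWeight_div_norm_le {ρ : ℝ} (hρ : 0 < ρ) :
    ∫⁻ z : ℂ, ENNReal.ofReal (2 * radialWeight ρ ‖z‖ / ‖z‖) ≤ ENNReal.ofReal (16 * Real.pi) := by
  rw [lintegral_fun_norm_complex (f := fun r ↦ ENNReal.ofReal (2 * radialWeight ρ r / r))
    (by fun_prop)]
  have hpolar : ∫⁻ r in Ioi 0, ENNReal.ofReal r * ENNReal.ofReal (2 * radialWeight ρ r / r) =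
      2 * ∫⁻ r in Ioi 0, ENNReal.ofReal (radialWeight ρ r) := by
    rw [← lintegral_const_mul _ (by fun_prop)]
    refine setLIntegral_congr_fun measurableSet_Ioi fun r (hr : 0 < r) ↦ ?_
    rw [← ENNReal.ofReal_mul hr.le, mul_div_cancel₀ _ hr.ne', ENNReal.ofReal_mul (by norm_num),
      ENNReal.ofReal_ofNat]
  rw [hpolar]
  calc 2 * ENNReal.ofReal Real.pi * (2 * ∫⁻ r in Ioi 0, ENNReal.ofReal (radialWeight ρ r))
      ≤ 2 * ENNReal.ofReal Real.pi * (2 * 4) := by gcongr; exact lintegral_radialWeight_le hρ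
    _ = ENNReal.ofReal (16 * Real.pi) := by
        rw [ENNReal.ofReal_mul (by norm_num)]
        norm_num
        ring

noncomputable def localKernel (L r : ℝ) : ℝ≥0∞ :=
  (Iic L).indicator (fun r ↦ ENNReal.ofReal (3 / (8 * L * r))) r

lemma measurable_localKernel (L : ℝ) : Measurable (localKernel L) :=
  (by fun_prop : Measurable fun r : ℝ ↦ ENNReal.ofReal (3 / (8 * L * r))).indicator
    measurableSet_Iic

lemma lintegral_localKernel_norm_le (L : ℝ) :
    ∫⁻ z : ℂ, localKernel L ‖z‖ ≤ ENNReal.ofReal (3 / 4 * Real.pi) := by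
  rw [lintegral_fun_norm_complex (measurable_localKernel L)]
  have hpolar : ∫⁻ r in Ioi 0, ENNReal.ofReal r * localKernel L r =
      ∫⁻ r in Ioi 0, (Iic L).indicator (fun _ ↦ ENNReal.ofReal (3 / (8 * L))) r := by
    refine setLIntegral_congr_fun measurableSet_Ioi fun r (hr : 0 < r) ↦ ?_
    by_cases hrL : r ∈ Iic L
    · rw [localKernel, indicator_of_mem hrL, indicator_of_mem hrL, ← ENNReal.ofReal_mul hr.le]
      congr 1
      field_simp
    · rw [localKernel, indicator_of_notMem hrL, indicator_of_notMem hrL, mul_zero]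
  have hrad :
      ENNReal.ofReal (3 / (8 * L)) * volume (Iic L ∩ Ioi 0) ≤ ENNReal.ofReal (3 / 8) := by
    rcases le_or_gt L 0 with hL | hL
    · simp [Iic_inter_Ioi, hL]
    · rw [Iic_inter_Ioi, Real.volume_Ioc, sub_zero, ← ENNReal.ofReal_mul (by positivity)]
      exact ENNReal.ofReal_le_ofReal (by field_simp; rfl)
  rw [hpolar, lintegral_indicator_const measurableSet_Iic,
    Measure.restrict_apply measurableSet_Iic]
  calc 2 * ENNReal.ofReal Real.pi * (ENNReal.ofReal (3 / (8 * L)) * volume (Iic L ∩ Ioi 0))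
      ≤ 2 * ENNReal.ofReal Real.pi * ENNReal.ofReal (3 / 8) := by gcongr
    _ = ENNReal.ofReal (3 / 4 * Real.pi) := by
        rw [mul_assoc, ← ENNReal.ofReal_mul Real.pi_pos.le, ← ENNReal.ofReal_ofNat 2,
          ← ENNReal.ofReal_mul (by norm_num)]
        ring_nf

lemma ofReal_radialWeight_div_le {ρ t d L : ℝ} (hρ : 0 ≤ ρ) (ht : 0 < t) (hd : 0 < d)
    (htL : t ≤ L + d) (hLt : L ≤ t + d) :
    ENNReal.ofReal (radialWeight ρ t / d) ≤
      ENNReal.ofReal (2 * radialWeight ρ t / t) + localKernel L d := by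
  have hG := radialWeight_nonneg hρ t
  rcases le_or_gt t (2 * d) with hnear | hfar
  · refine le_add_right (ENNReal.ofReal_le_ofReal ?_)
    rw [div_le_div_iff₀ hd ht]
    nlinarith
  · have hdL : d ∈ Iic L := by simp only [mem_Iic]; linarith
    refine le_add_left ?_
    rw [localKernel, indicator_of_mem hdL]
    refine ENNReal.ofReal_le_ofReal ?_
    calc radialWeight ρ t / d ≤ 1 / (4 * t) / d := by
          gcongr; exact radialWeight_le_inv hρ ht
      _ ≤ 3 / (8 * L * d) := by
          have hL : 0 < L := by linarith
          rw [div_div, div_le_div_iff₀ (by positivity) (by positivity)]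
          nlinarith

lemma integrand_le_radialWeight_add_localKernel {ρ : ℝ} (hρ : 0 ≤ ρ) {z l : ℂ} (hz : z ≠ 0)
    (hzl : z ≠ l) :
    ENNReal.ofReal ((‖z‖ ^ 2 + 1) * ρ) /
        (ENNReal.ofReal (‖z‖ ^ 2) * ENNReal.ofReal ((1 + ρ * (‖z‖ + ‖z‖⁻¹)) ^ 2) *
          ENNReal.ofReal ‖z - l‖) ≤
      ENNReal.ofReal (2 * radialWeight ρ ‖z‖ / ‖z‖) + localKernel ‖l‖ ‖z - l‖ := by
  have ht : 0 < ‖z‖ := norm_pos_iff.mpr hz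
  have hd : 0 < ‖z - l‖ := norm_pos_iff.mpr (sub_ne_zero.mpr hzl)
  have hfac : 0 < 1 + ρ * (‖z‖ + ‖z‖⁻¹) := by positivity
  rw [← ENNReal.ofReal_mul (by positivity), ← ENNReal.ofReal_mul (by positivity),
    ← ENNReal.ofReal_div_of_pos (by positivity), ← div_div, radialWeight_eq ht.ne']
  refine ofReal_radialWeight_div_le hρ ht hd ?_ ?_
  · simpa [add_comm] using norm_add_le (z - l) l
  · simpa using norm_sub_le z (z - l)

/-- estimate (11.5): uniform bound on
`∫_ℂ (|ζ|²+1)ρ/(|ζ|²(1+ρ(|ζ|+|ζ|⁻¹))²|ζ−λ|)`. -/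
theorem stmt_15 :
    ∃ n₂ : ℝ, 0 < n₂ ∧
      ∀ (l : ℂ) (ρ : ℝ), 0 < ρ →
        ∫⁻ ζ : ℂ, ENNReal.ofReal ((‖ζ‖ ^ 2 + 1) * ρ) /
            (ENNReal.ofReal (‖ζ‖ ^ 2) *
              ENNReal.ofReal ((1 + ρ * (‖ζ‖ + ‖ζ‖⁻¹)) ^ 2) *
              ENNReal.ofReal (‖ζ - l‖))
          ≤ ENNReal.ofReal n₂ := by
  refine ⟨60, by norm_num, fun l ρ hρ ↦ ?_⟩
  have hae : ∀ᵐ ζ : ℂ, ζ ∉ ({0, l} : Set ℂ) :=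
    ((countable_singleton l).insert 0).ae_notMem volume
  calc _ ≤ ∫⁻ ζ : ℂ, (ENNReal.ofReal (2 * radialWeight ρ ‖ζ‖ / ‖ζ‖) +
          localKernel ‖l‖ ‖ζ - l‖) := by
        refine lintegral_mono_ae (hae.mono fun ζ hζ ↦ ?_)
        simp only [mem_insert_iff, mem_singleton_iff, not_or] at hζ
        exact integrand_le_radialWeight_add_localKernel hρ.le hζ.1 hζ.2
    _ = (∫⁻ ζ : ℂ, ENNReal.ofReal (2 * radialWeight ρ ‖ζ‖ / ‖ζ‖)) +
          ∫⁻ ζ : ℂ, localKernel ‖l‖ ‖ζ‖ := by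
        rw [lintegral_add_left (by fun_prop),
          lintegral_sub_right_eq_self (fun ζ ↦ localKernel ‖l‖ ‖ζ‖)]
    _ ≤ ENNReal.ofReal (16 * Real.pi) + ENNReal.ofReal (3 / 4 * Real.pi) :=
        add_le_add (lintegral_radialWeight_div_norm_le hρ) (lintegral_localKernel_norm_le ‖l‖)
    _ ≤ ENNReal.ofReal 60 := by
        rw [← ENNReal.ofReal_add (by positivity) (by positivity)]
        exact ENNReal.ofReal_le_ofReal (by nlinarith [Real.pi_lt_d2])
end

section
/- There exists a constant n₃ > 0 such that for every λ ∈ ℂ and every ρ > 0 one has ∫_ℂ ρ / ( |ζ| (1 + ρ(|ζ| + |ζ|⁻¹)) |ζ−λ| ) dReζ dImζ ≤ n₃, where the integral is with respect to Lebesgue measure on ℂ ≅ ℝ². -/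
open MeasureTheory
open scoped ENNReal

/-!
Since `|ζ| (1 + ρ (|ζ| + |ζ|⁻¹)) ≥ ρ (1 + |ζ|²)`, the integrand is at most
`1 / ((1 + |ζ|²) |ζ - λ|)`, independently of `ρ`. With `k(ζ) = 1 / (|ζ| (1 + |ζ|)²)`, which is
integrable on the plane (like `|ζ|⁻¹` at `0` and `|ζ|⁻³` at infinity), one has
`1 / ((1 + |ζ|²) |ζ - λ|) ≤ 8 (k(ζ - λ) + k(ζ))`: compare `1 + |ζ|²` with `|ζ - λ|²` when
`|ζ - λ| ≤ 2|ζ| + 1`, and `|ζ - λ|` with `1 + |ζ|` otherwise. By translation invariance the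
integral is then at most `16 ∫ k`, uniformly in `λ` and `ρ`.
-/

lemma inv_one_add_sq_mul_le {a b : ℝ} (ha : 0 < a) (hb : 0 < b) :
    ((1 + a ^ 2) * b)⁻¹ ≤ 8 * ((b * (1 + b) ^ 2)⁻¹ + (a * (1 + a) ^ 2)⁻¹) := by
  have hka : 0 ≤ (a * (1 + a) ^ 2)⁻¹ := by positivity
  have hkb : 0 ≤ (b * (1 + b) ^ 2)⁻¹ := by positivity
  rcases le_or_gt b (2 * a + 1) with hab | hab
  · have h : b * (1 + b) ^ 2 ≤ 8 * ((1 + a ^ 2) * b) := by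
      have : (1 + b) ^ 2 ≤ 8 * (1 + a ^ 2) := by nlinarith [sq_nonneg (a - 1)]
      nlinarith
    calc ((1 + a ^ 2) * b)⁻¹ = 8 * (8 * ((1 + a ^ 2) * b))⁻¹ := by field_simp
      _ ≤ 8 * (b * (1 + b) ^ 2)⁻¹ := by gcongr
      _ ≤ _ := by linarith
  · have h : a * (1 + a) ^ 2 ≤ 8 * ((1 + a ^ 2) * b) := by
      have : a * (1 + a) ≤ 2 * (1 + a ^ 2) := by nlinarith [sq_nonneg (a - 1)]
      nlinarith
    calc ((1 + a ^ 2) * b)⁻¹ = 8 * (8 * ((1 + a ^ 2) * b))⁻¹ := by field_simp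
      _ ≤ 8 * (a * (1 + a) ^ 2)⁻¹ := by gcongr
      _ ≤ _ := by linarith

lemma div_mul_one_add_mul_add_inv_le {ρ a b : ℝ} (hρ : 0 < ρ) (ha : 0 < a) (hb : 0 ≤ b) :
    ρ / (a * (1 + ρ * (a + a⁻¹)) * b) ≤ ((1 + a ^ 2) * b)⁻¹ := by
  rcases hb.eq_or_lt with rfl | hb
  · simp
  have h : ρ * ((1 + a ^ 2) * b) ≤ a * (1 + ρ * (a + a⁻¹)) * b := by
    have : a * (1 + ρ * (a + a⁻¹)) = a + ρ * (1 + a ^ 2) := by field_simp; ring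
    rw [this]
    nlinarith [mul_pos ha hb]
  calc ρ / (a * (1 + ρ * (a + a⁻¹)) * b) ≤ ρ / (ρ * ((1 + a ^ 2) * b)) := by gcongr
    _ = ((1 + a ^ 2) * b)⁻¹ := by field_simp

section

variable {E : Type*} [NormedAddCommGroup E] [NormedSpace ℝ E] [FiniteDimensional ℝ E]
  [MeasurableSpace E] [BorelSpace E] (μ : Measure E) [μ.IsAddHaarMeasure]

lemma integrable_inv_norm_mul_one_add_norm_sq (hE : Module.finrank ℝ E = 2) :
    Integrable (fun x : E ↦ (‖x‖ * (1 + ‖x‖) ^ 2)⁻¹) μ := by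
  have : Nontrivial E := Module.nontrivial_of_finrank_eq_succ hE
  rw [integrable_fun_norm_addHaar μ (f := fun y ↦ (y * (1 + y) ^ 2)⁻¹), hE]
  have h : IntegrableOn (fun y : ℝ ↦ (1 + ‖y‖) ^ (-2 : ℝ)) (Set.Ioi 0) :=
    (integrable_one_add_norm (by norm_num)).integrableOn
  refine h.congr_fun (fun y (hy : 0 < y) ↦ ?_) measurableSet_Ioi
  dsimp only
  rw [Real.norm_of_nonneg hy.le, Real.rpow_neg (by positivity), Real.rpow_two, smul_eq_mul,
    pow_one, mul_inv, ← mul_assoc, mul_inv_cancel₀ hy.ne', one_mul]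

end

/-- estimate (11.6): uniform bound on
`∫_ℂ ρ/(|ζ|(1+ρ(|ζ|+|ζ|⁻¹))|ζ−λ|)`. -/
theorem stmt_16 :
    ∃ n₃ : ℝ, 0 < n₃ ∧
      ∀ (l : ℂ) (ρ : ℝ), 0 < ρ →
        ∫⁻ ζ : ℂ, ENNReal.ofReal ρ /
            (ENNReal.ofReal ‖ζ‖ *
              ENNReal.ofReal (1 + ρ * (‖ζ‖ + ‖ζ‖⁻¹)) *
              ENNReal.ofReal ‖ζ - l‖)
          ≤ ENNReal.ofReal n₃ := by
  set k : ℂ → ℝ≥0∞ := fun ζ ↦ ENNReal.ofReal (‖ζ‖ * (1 + ‖ζ‖) ^ 2)⁻¹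
  have hk : Measurable k := by fun_prop
  have hk_lt_top : ∫⁻ ζ, k ζ < ∞ := (integrable_inv_norm_mul_one_add_norm_sq volume
    Complex.finrank_real_complex).lintegral_lt_top
  refine ⟨(16 * ∫⁻ ζ, k ζ).toReal + 1, by positivity, fun l ρ hρ ↦ ?_⟩
  -- at `ζ = 0` and `ζ = l` the integrand is `ρ / 0 = ∞`
  have hae : ∀ᵐ ζ : ℂ, ζ ≠ 0 ∧ ζ ≠ l := by
    filter_upwards [Measure.ae_ne volume 0, Measure.ae_ne volume l] with ζ h0 hl using ⟨h0, hl⟩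
  calc _ ≤ ∫⁻ ζ, 8 * (k (ζ - l) + k ζ) := by
        refine lintegral_mono_ae (hae.mono fun ζ ⟨h0, hl⟩ ↦ ?_)
        have ha : 0 < ‖ζ‖ := norm_pos_iff.2 h0
        have hb : 0 < ‖ζ - l‖ := norm_pos_iff.2 (sub_ne_zero.2 hl)
        rw [← ENNReal.ofReal_mul ha.le, ← ENNReal.ofReal_mul (by positivity),
          ← ENNReal.ofReal_div_of_pos (by positivity), ← ENNReal.ofReal_add (by positivity)
          (by positivity), ← ENNReal.ofReal_ofNat, ← ENNReal.ofReal_mul (by norm_num)]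
        exact ENNReal.ofReal_le_ofReal <| (div_mul_one_add_mul_add_inv_le hρ ha hb.le).trans
          (inv_one_add_sq_mul_le ha hb)
    _ = 16 * ∫⁻ ζ, k ζ := by
        rw [lintegral_const_mul _ (by fun_prop), lintegral_add_right _ hk,
          lintegral_sub_right_eq_self k l, ← two_mul, ← mul_assoc]
        norm_num
    _ ≤ _ := by
        rw [ENNReal.le_ofReal_iff_toReal_le (ENNReal.mul_ne_top (by norm_num) hk_lt_top.ne)
          (by positivity)]
        linarith
end
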